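/- arXiv:2605.06156 — 2 statements merged into one kernel-verified Lean document; each statement's English description precedes it below -/
import Mathlib

section
/- Let Ω ⊆ ℝ^d be a measurable set with finite positive Lebesgue measure, let λ ∈ (0,1) and η, β > 0, let Q : Ω → ℝ be bounded measurable, and let μ : Ω → ℝ be a probability density on Ω bounded above and below by positive constants. Define δ = λη/(1+λη), κ = β(1+λη)/η, Z = ∫_Ω μ(a)^δ·exp(Q(a)/κ) da, and π*(a) = (1/Z)·μ(a)^δ·exp(Q(a)/κ). Then π* is a probability density bounded above and below by positive constants, and it is a fixed point of the Mirror Descent update: π* is the unique (up to almost-everywhere equality) maximizer, over all probability densities π on Ω, of the objective J(π; π*) = ∫_Ω π(a)[(1/β)Q(a) − (1/η)·log π*(a)] da − (1−λ)·KL(π‖π*) − λ·KL(π‖μ). -/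
open MeasureTheory Classical

/-- KL divergence between two probability densities `p, f` w.r.t. the measure `ν`,
valued in the extended reals: `KL(p‖f) = ∫ p log(p/f) dν`, set to `+∞` when the
integrand is not integrable. -/
noncomputable def klE {α : Type*} [MeasurableSpace α] (ν : Measure α)
    (p f : α → ℝ) : EReal :=
  if Integrable (fun a => p a * Real.log (p a / f a)) ν
  then ((∫ a, p a * Real.log (p a / f a) ∂ν : ℝ) : EReal)
  else ⊤

/-- `p` is a probability density with respect to the measure `ν`. -/
def IsProbDensity {α : Type*} [MeasurableSpace α] (ν : Measure α) (p : α → ℝ) : Prop :=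
  Measurable p ∧ (∀ᵐ a ∂ν, 0 ≤ p a) ∧ ∫ a, p a ∂ν = 1

/-- The local fine-tuning objective with anchor density `q`:
`J(π; q) = ∫ π [(1/β)Q − (1/η) log q] − (1−λ)·KL(π‖q) − λ·KL(π‖μ)`. -/
noncomputable def Jobj {α : Type*} [MeasurableSpace α] (ν : Measure α)
    (Q q μ : α → ℝ) (l η β : ℝ) (p : α → ℝ) : EReal :=
  ((∫ a, p a * ((1 / β) * Q a - (1 / η) * Real.log (q a)) ∂ν : ℝ) : EReal)
    - ((1 - l : ℝ) : EReal) * klE ν p q - ((l : ℝ) : EReal) * klE ν p μ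


/-!
Writing `log π* = δ log μ + Q/κ - log Z`, the choice of `δ` and `κ` makes the potential
`(1/β) Q - (1/η) log π* - λ log (π*/μ)` equal to the constant `(1/η + λ) log Z` on `Ω`. Since
`KL(p‖μ) = KL(p‖π*) + ∫ p log (π*/μ)`, this gives `J(p; π*) = (1/η + λ) log Z - KL(p‖π*)` for every
density `p`, and Gibbs' inequality (`KL(p‖π*) ≥ 0`, with equality only for `p = π*` a.e.) finishes
the argument. The two-sided bounds on `μ` and `Q` keep every logarithmic term integrable.
-/

open Real Set InformationTheory

lemma rpow_mul_exp_div_mem_Icc {m c C q M δ κ : ℝ} (hc : 0 < c) (hm : m ∈ Icc c C)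
    (hq : |q| ≤ M) (hδ : 0 ≤ δ) (hκ : 0 < κ) :
    m ^ δ * exp (q / κ) ∈ Icc (c ^ δ * exp (-M / κ)) (C ^ δ * exp (M / κ)) := by
  obtain ⟨hq₁, hq₂⟩ := abs_le.mp hq
  have hm₀ : 0 ≤ m := hc.le.trans hm.1
  exact ⟨mul_le_mul (rpow_le_rpow hc.le hm.1 hδ) (exp_le_exp.2 (by gcongr)) (exp_pos _).le
      (by positivity),
    mul_le_mul (rpow_le_rpow hm₀ hm.2 hδ) (exp_le_exp.2 (by gcongr)) (exp_pos _).le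
      (rpow_nonneg (hm₀.trans hm.2) _)⟩

lemma tempered_first_order_condition {l η β δ κ m q Z : ℝ} (hη : η ≠ 0) (hβ : β ≠ 0)
    (hlη : 1 + l * η ≠ 0) (hδ : δ = l * η / (1 + l * η)) (hκ : κ = β * (1 + l * η) / η)
    (hm : 0 < m) (hZ : 0 < Z) :
    1 / β * q - 1 / η * log (m ^ δ * exp (q / κ) / Z)
      - l * log (m ^ δ * exp (q / κ) / Z / m) = (1 / η + l) * log Z := by
  have hlog : log (m ^ δ * exp (q / κ) / Z) = δ * log m + q / κ - log Z := by
    rw [log_div (by positivity) hZ.ne', log_mul (by positivity) (exp_pos _).ne', log_rpow hm,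
      log_exp]
  have hηl : 1 + η * l ≠ 0 := by rwa [mul_comm]
  rw [log_div (by positivity) hm.ne', hlog, hδ, hκ]
  field_simp
  ring

section

variable {α : Type*} [MeasurableSpace α] {ν : Measure α}

lemma IsProbDensity.integrable {p : α → ℝ} (hp : IsProbDensity ν p) : Integrable p ν := by
  by_contra h
  exact one_ne_zero (hp.2.2.symm.trans (integral_undef h))

lemma MeasureTheory.Integrable.mul_log_div_of_mem_Icc {p q r : α → ℝ} {m₁ M₁ m₂ M₂ : ℝ}
    (hp : Integrable p ν) (hq : Measurable q) (hr : Measurable r) (hm₁ : 0 < m₁) (hm₂ : 0 < m₂)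
    (hqb : ∀ᵐ a ∂ν, q a ∈ Icc m₁ M₁) (hrb : ∀ᵐ a ∂ν, r a ∈ Icc m₂ M₂) :
    Integrable (fun a => p a * log (q a / r a)) ν := by
  refine hp.mul_bdd (hq.div hr).log.aestronglyMeasurable
    (c := max |log m₁| |log M₁| + max |log m₂| |log M₂|) ?_
  filter_upwards [hqb, hrb] with a hqa hra
  have hqa₀ := hm₁.trans_le hqa.1
  have hra₀ := hm₂.trans_le hra.1
  rw [norm_eq_abs, log_div hqa₀.ne' hra₀.ne']
  exact (abs_sub _ _).trans <| add_le_add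
    (abs_le_max_abs_abs (log_le_log hm₁ hqa.1) (log_le_log hqa₀ hqa.2))
    (abs_le_max_abs_abs (log_le_log hm₂ hra.1) (log_le_log hra₀ hra.2))

lemma isProbDensity_div_integral [IsFiniteMeasure ν] [NeZero ν] {g : α → ℝ} {m M : ℝ}
    (hg : Measurable g) (hm : 0 < m) (hgb : ∀ᵐ a ∂ν, g a ∈ Icc m M) :
    0 < ∫ a, g a ∂ν ∧ IsProbDensity ν (fun a => g a / ∫ a, g a ∂ν) := by
  have hint : Integrable g ν := .of_bound hg.aestronglyMeasurable (max |m| |M|) <| by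
    filter_upwards [hgb] with a ha using abs_le_max_abs_abs ha.1 ha.2
  have hpos : 0 < ∫ a, g a ∂ν :=
    calc 0 < ν.real univ * m := mul_pos (measureReal_univ_pos) hm
      _ = ∫ _, m ∂ν := by rw [integral_const, smul_eq_mul]
      _ ≤ ∫ a, g a ∂ν := integral_mono_ae (integrable_const m) hint (by
          filter_upwards [hgb] with a ha using ha.1)
  refine ⟨hpos, hg.div_const _, ?_, by rw [integral_div, div_self hpos.ne']⟩
  filter_upwards [hgb] with a ha using div_nonneg (hm.le.trans ha.1) hpos.le

/-- Gibbs' inequality: `q · klFun (p / q) = p log (p / q) - p + q` is nonnegative, and the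
correction `- p + q` integrates to zero. -/
lemma integrable_mul_klFun_div_and_integral_eq {p q : α → ℝ} (hp : IsProbDensity ν p)
    (hq : IsProbDensity ν q) (hq_pos : ∀ᵐ a ∂ν, 0 < q a)
    (hint : Integrable (fun a => p a * log (p a / q a)) ν) :
    Integrable (fun a => q a * klFun (p a / q a)) ν ∧
      ∫ a, p a * log (p a / q a) ∂ν = ∫ a, q a * klFun (p a / q a) ∂ν := by
  have hpt : (fun a => p a * log (p a / q a) - p a + q a)
      =ᵐ[ν] fun a => q a * klFun (p a / q a) := by
    filter_upwards [hq_pos] with a ha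
    rw [klFun_apply]
    field_simp
    ring
  have hsub : Integrable (fun a => p a * log (p a / q a) - p a) ν := hint.sub hp.integrable
  refine ⟨(hsub.add hq.integrable).congr hpt, ?_⟩
  rw [← integral_congr_ae hpt, integral_add hsub hq.integrable,
    integral_sub hint hp.integrable, hp.2.2, hq.2.2]
  ring

lemma ae_nonneg_mul_klFun_div {p q : α → ℝ} (hp : ∀ᵐ a ∂ν, 0 ≤ p a)
    (hq_pos : ∀ᵐ a ∂ν, 0 < q a) : 0 ≤ᵐ[ν] fun a => q a * klFun (p a / q a) := by
  filter_upwards [hp, hq_pos] with a hpa hqa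
  exact mul_nonneg hqa.le (klFun_nonneg (div_nonneg hpa hqa.le))

lemma klE_nonneg {p q : α → ℝ} (hp : IsProbDensity ν p) (hq : IsProbDensity ν q)
    (hq_pos : ∀ᵐ a ∂ν, 0 < q a) : 0 ≤ klE ν p q := by
  unfold klE
  split_ifs with hint
  · rw [EReal.coe_nonneg, (integrable_mul_klFun_div_and_integral_eq hp hq hq_pos hint).2]
    exact integral_nonneg_of_ae (ae_nonneg_mul_klFun_div hp.2.1 hq_pos)
  · exact le_top

lemma ae_eq_of_klE_eq_zero {p q : α → ℝ} (hp : IsProbDensity ν p) (hq : IsProbDensity ν q)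
    (hq_pos : ∀ᵐ a ∂ν, 0 < q a) (h : klE ν p q = 0) : p =ᵐ[ν] q := by
  unfold klE at h
  split_ifs at h with hint
  · obtain ⟨hint', heq⟩ := integrable_mul_klFun_div_and_integral_eq hp hq hq_pos hint
    rw [EReal.coe_eq_zero, heq] at h
    have hzero := (integral_eq_zero_iff_of_nonneg_ae (ae_nonneg_mul_klFun_div hp.2.1 hq_pos)
      hint').mp h
    filter_upwards [hzero, hp.2.1, hq_pos] with a hzero hpa hqa
    have := (klFun_eq_zero_iff (div_nonneg hpa hqa.le)).mp
      ((mul_eq_zero.mp hzero).resolve_left hqa.ne')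
    rwa [div_eq_one_iff_eq hqa.ne'] at this
  · exact absurd h EReal.top_ne_zero

lemma klE_self (q : α → ℝ) : klE ν q q = 0 := by
  simp [klE]

lemma klE_eq_klE_add_integral {p q r : α → ℝ} (hp : ∀ᵐ a ∂ν, 0 ≤ p a)
    (hq : ∀ᵐ a ∂ν, 0 < q a) (hr : ∀ᵐ a ∂ν, 0 < r a)
    (hlog : Integrable (fun a => p a * log (q a / r a)) ν) :
    klE ν p r = klE ν p q + ((∫ a, p a * log (q a / r a) ∂ν : ℝ) : EReal) := by
  have hpt : (fun a => p a * log (p a / q a) + p a * log (q a / r a))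
      =ᵐ[ν] fun a => p a * log (p a / r a) := by
    filter_upwards [hp, hq, hr] with a hpa hqa hra
    rcases hpa.eq_or_lt with hpa | hpa
    · simp [← hpa]
    · rw [← mul_add, ← log_mul (by positivity) (by positivity), div_mul_div_cancel₀ hqa.ne']
  have hint_iff : Integrable (fun a => p a * log (p a / q a)) ν ↔
      Integrable (fun a => p a * log (p a / r a)) ν :=
    ⟨fun h => (h.add hlog).congr hpt, fun h => (h.sub hlog).congr <| by
      filter_upwards [hpt] with a ha
      simp only [Pi.sub_apply, ← ha, add_sub_cancel_right]⟩
  unfold klE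
  by_cases hint : Integrable (fun a => p a * log (p a / q a)) ν
  · rw [if_pos (hint_iff.mp hint), if_pos hint, ← integral_congr_ae hpt,
      integral_add hint hlog, EReal.coe_add]
  · rw [if_neg (hint_iff.not.mp hint), if_neg hint, EReal.top_add_coe]

lemma Jobj_eq_sub_klE {Q q μ p : α → ℝ} {l η β K : ℝ} (hl : l ∈ Ioo 0 1)
    (hp : IsProbDensity ν p) (hq : ∀ᵐ a ∂ν, 0 < q a) (hμ : ∀ᵐ a ∂ν, 0 < μ a)
    (hlog : Integrable (fun a => p a * log (q a / μ a)) ν)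
    (hK : ∀ᵐ a ∂ν, 1 / β * Q a - 1 / η * log (q a) - l * log (q a / μ a) = K) :
    Jobj ν Q q μ l η β p = K - klE ν p q := by
  have hlin : ∫ a, p a * (1 / β * Q a - 1 / η * log (q a)) ∂ν
      = K + l * ∫ a, p a * log (q a / μ a) ∂ν := by
    have hpt : (fun a => p a * (1 / β * Q a - 1 / η * log (q a)))
        =ᵐ[ν] fun a => p a * K + l * (p a * log (q a / μ a)) := by
      filter_upwards [hK] with a ha
      rw [← ha]
      ring
    rw [integral_congr_ae hpt, integral_add (hp.integrable.mul_const K) (hlog.const_mul l),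
      integral_mul_const, integral_const_mul, hp.2.2, one_mul]
  rw [Jobj, klE_eq_klE_add_integral hp.2.1 hq hμ hlog, hlin]
  induction klE ν p q using EReal.rec with
  | bot =>
    rw [EReal.bot_add, EReal.coe_mul_bot_of_pos hl.1, EReal.coe_mul_bot_of_pos (sub_pos.2 hl.2),
      EReal.coe_sub_bot, EReal.top_sub_bot, EReal.coe_sub_bot]
  | top =>
    rw [EReal.top_add_coe, EReal.coe_mul_top_of_pos hl.1,
      EReal.coe_mul_top_of_pos (sub_pos.2 hl.2), EReal.sub_top, EReal.sub_top]
  | coe x => norm_cast; ring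

lemma le_and_ae_eq_of_eq_sub_klE {F : (α → ℝ) → EReal} {q : α → ℝ} {K : ℝ}
    (hq : IsProbDensity ν q) (hq_pos : ∀ᵐ a ∂ν, 0 < q a)
    (hF : ∀ p, IsProbDensity ν p → F p = K - klE ν p q) :
    ∀ p, IsProbDensity ν p → F p ≤ F q ∧ (F p = F q → p =ᵐ[ν] q) := by
  intro p hp
  rw [hF p hp, hF q hq, klE_self, sub_zero]
  have hnonneg := klE_nonneg hp hq hq_pos
  obtain ⟨hle, heq⟩ : (K : EReal) - klE ν p q ≤ K ∧
      ((K : EReal) - klE ν p q = K → klE ν p q = 0) := by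
    generalize klE ν p q = x at hnonneg
    induction x using EReal.rec with
    | bot => exact absurd hnonneg (by simp)
    | top => simp
    | coe x =>
      norm_cast at hnonneg ⊢
      exact ⟨by linarith, fun h => by linarith⟩
  exact ⟨hle, fun h => ae_eq_of_klE_eq_zero hp hq hq_pos (heq h)⟩

end

/-- **The tempered density is a fixed point of the Mirror Descent update.**
With `δ = λη/(1+λη)`, `κ = β(1+λη)/η`, and `π* = μ^δ exp(Q/κ)/Z`, the density `π*`
is bounded above and below by positive constants, is a probability density, and is
the unique (up to a.e. equality) maximizer of `J(· ; π*)` over all probability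
densities: updating with anchor `q = π*` returns `π*` itself. -/
theorem tempered_density_is_mirror_descent_fixed_point
    {d : ℕ} (Ω : Set (EuclideanSpace ℝ (Fin d))) (hΩ : MeasurableSet Ω)
    (hΩpos : 0 < volume Ω) (hΩfin : volume Ω < ⊤)
    (l η β : ℝ) (hl : l ∈ Set.Ioo (0 : ℝ) 1) (hη : 0 < η) (hβ : 0 < β)
    (Q : EuclideanSpace ℝ (Fin d) → ℝ) (hQm : Measurable Q)
    (MQ : ℝ) (hQbd : ∀ a ∈ Ω, |Q a| ≤ MQ)
    (μ : EuclideanSpace ℝ (Fin d) → ℝ)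
    (hμ : IsProbDensity (volume.restrict Ω) μ)
    (c C : ℝ) (hc : 0 < c) (hμbd : ∀ a ∈ Ω, c ≤ μ a ∧ μ a ≤ C)
    (δ κ : ℝ) (hδ : δ = l * η / (1 + l * η)) (hκ : κ = β * (1 + l * η) / η)
    (Z : ℝ) (hZdef : Z = ∫ a, μ a ^ δ * Real.exp (Q a / κ) ∂(volume.restrict Ω))
    (πstar : EuclideanSpace ℝ (Fin d) → ℝ)
    (hπstar : ∀ a, πstar a = μ a ^ δ * Real.exp (Q a / κ) / Z) :
    (∃ c' C' : ℝ, 0 < c' ∧ ∀ a ∈ Ω, c' ≤ πstar a ∧ πstar a ≤ C') ∧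
    IsProbDensity (volume.restrict Ω) πstar ∧
    ∀ p : EuclideanSpace ℝ (Fin d) → ℝ, IsProbDensity (volume.restrict Ω) p →
      (Jobj (volume.restrict Ω) Q πstar μ l η β p
          ≤ Jobj (volume.restrict Ω) Q πstar μ l η β πstar ∧
       (Jobj (volume.restrict Ω) Q πstar μ l η β p
          = Jobj (volume.restrict Ω) Q πstar μ l η β πstar →
        p =ᵐ[volume.restrict Ω] πstar)) := by
  set ν : Measure (EuclideanSpace ℝ (Fin d)) := volume.restrict Ω
  have : IsFiniteMeasure ν := ⟨by simpa [ν] using hΩfin⟩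
  have : NeZero ν := ⟨by simpa [ν, Measure.restrict_eq_zero] using hΩpos.ne'⟩
  have hae {P : EuclideanSpace ℝ (Fin d) → Prop} (h : ∀ a ∈ Ω, P a) : ∀ᵐ a ∂ν, P a :=
    ae_restrict_of_forall_mem hΩ h
  have hμm : Measurable μ := hμ.1
  have hμ_pos (a) (ha : a ∈ Ω) : 0 < μ a := hc.trans_le (hμbd a ha).1
  have hδ₀ : 0 ≤ δ := hδ ▸ by positivity [hl.1]
  have hκ₀ : 0 < κ := hκ ▸ by positivity [hl.1]
  set m := c ^ δ * exp (-MQ / κ)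
  set M := C ^ δ * exp (MQ / κ)
  have hg (a) (ha : a ∈ Ω) : μ a ^ δ * exp (Q a / κ) ∈ Icc m M :=
    rpow_mul_exp_div_mem_Icc hc (hμbd a ha) (hQbd a ha) hδ₀ hκ₀
  obtain ⟨hZ, hπ⟩ := isProbDensity_div_integral (by fun_prop) (by positivity) (hae hg)
  rw [← hZdef] at hZ hπ
  rw [← funext hπstar] at hπ
  have hπbd (a) (ha : a ∈ Ω) : πstar a ∈ Icc (m / Z) (M / Z) := hπstar a ▸
    ⟨div_le_div_of_nonneg_right (hg a ha).1 hZ.le, div_le_div_of_nonneg_right (hg a ha).2 hZ.le⟩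
  have hπ_pos : ∀ᵐ a ∂ν, 0 < πstar a :=
    hae fun a ha => (by positivity : 0 < m / Z).trans_le (hπbd a ha).1
  have hstat : ∀ᵐ a ∂ν, 1 / β * Q a - 1 / η * log (πstar a) - l * log (πstar a / μ a)
      = (1 / η + l) * log Z := hae fun a ha => by
    rw [hπstar]
    exact tempered_first_order_condition hη.ne' hβ.ne' (by positivity [hl.1]) hδ hκ
      (hμ_pos a ha) hZ
  refine ⟨⟨m / Z, M / Z, by positivity, hπbd⟩, hπ, le_and_ae_eq_of_eq_sub_klE hπ hπ_pos
    fun p hp => Jobj_eq_sub_klE hl hp hπ_pos (hae hμ_pos) ?_ hstat⟩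
  exact hp.integrable.mul_log_div_of_mem_Icc hπ.1 hμm (by positivity) hc (hae hπbd) (hae hμbd)
end

section
/- Let ν be a probability measure on ℝ^d, let t ∈ (0,1), and let φ_s(x) = (2πs²)^{−d/2}·exp(−‖x‖²/(2s²)) denote the centered Gaussian density with standard deviation s on ℝ^d. Define p_t(x) = ∫ φ_{1−t}(x − t·y) dν(y), which is the density of X_t = (1−t)·X₀ + t·X₁ where X₀ is a standard Gaussian on ℝ^d independent of X₁ ∼ ν. Define the marginal velocity field v_t(x) = (∫ (y − (x − t·y)/(1−t))·φ_{1−t}(x − t·y) dν(y)) / p_t(x), all integrals converging absolutely. Then p_t is strictly positive and differentiable on ℝ^d, and for every x ∈ ℝ^d the score satisfies ∇_x log p_t(x) = (t·v_t(x) − x)/(1−t). -/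
/-!
Write `x₀ = (x - t y)/(1 - t)` for the noise that, together with the endpoint `y`, produces
the point `x` of the path. Differentiating the Gaussian mixture `p_t` under the integral (the
kernel and its gradient are bounded, `ν` is finite) gives Tweedie's formula
`∇ log p_t(x) = -E[X₀ | X_t = x]/(1 - t)`. On the other hand `y - x₀ = (x - x₀)/t`, so
`t v_t(x) = x - E[X₀ | X_t = x]`, and eliminating the posterior mean of the noise gives the
identity.
-/

open MeasureTheory InnerProductSpace

theorem Real.mul_exp_neg_sq_div_le {s : ℝ} (hs : 0 < s) (r : ℝ) :
    r * Real.exp (-r ^ 2 / (2 * s ^ 2)) ≤ s := by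
  have hr : r ≤ s * Real.exp (r ^ 2 / (2 * s ^ 2)) :=
    calc r ≤ s * (r ^ 2 / (2 * s ^ 2) + 1) := by
          field_simp; nlinarith [sq_nonneg (r - s)]
      _ ≤ s * Real.exp (r ^ 2 / (2 * s ^ 2)) := by gcongr; exact Real.add_one_le_exp _
  rwa [neg_div, Real.exp_neg, ← div_eq_mul_inv, div_le_iff₀ (Real.exp_pos _)]

theorem MeasureTheory.integral_pos_of_forall_pos {α : Type*} [MeasurableSpace α] {μ : Measure α}
    [NeZero μ] {f : α → ℝ} (hf : ∀ a, 0 < f a) (hfi : Integrable f μ) : 0 < ∫ a, f a ∂μ := by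
  have hsupp : Function.support f = Set.univ := Set.eq_univ_of_forall fun a => (hf a).ne'
  rw [integral_pos_iff_support_of_nonneg (fun a => (hf a).le) hfi, hsupp]
  simp [NeZero.ne μ]

theorem HasGradientAt.log {E : Type*} [NormedAddCommGroup E] [InnerProductSpace ℝ E]
    [CompleteSpace E] {f : E → ℝ} {f' x : E} (hf : HasGradientAt f f' x) (hx : f x ≠ 0) :
    HasGradientAt (fun z => Real.log (f z)) ((f x)⁻¹ • f') x := by
  rw [hasGradientAt_iff_hasFDerivAt] at hf ⊢
  simpa using hf.log hx

section ParametricIntegral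

variable {E F Ω : Type*} [NormedAddCommGroup E] [NormedAddCommGroup F]
  [MeasurableSpace Ω] {μ : Measure Ω} [IsFiniteMeasure μ] {g : Ω → E}

theorem integrable_comp_sub_of_norm_le {h : E → F} (hh : Continuous h) {C : ℝ}
    (hC : ∀ z, ‖h z‖ ≤ C) (hg : AEStronglyMeasurable g μ) (x : E) :
    Integrable (fun ω => h (x - g ω)) μ :=
  .of_bound (hh.comp_aestronglyMeasurable (aestronglyMeasurable_const.sub hg)) C
    (ae_of_all _ fun _ => hC _)

theorem hasFDerivAt_integral_comp_sub [NormedSpace ℝ E] [NormedSpace ℝ F] [CompleteSpace F]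
    {f : E → F} {f' : E → E →L[ℝ] F}
    (hf : ∀ z, HasFDerivAt f (f' z) z) (hf' : Continuous f') {A B : ℝ}
    (hfA : ∀ z, ‖f z‖ ≤ A) (hf'B : ∀ z, ‖f' z‖ ≤ B) (hg : AEStronglyMeasurable g μ) (x : E) :
    HasFDerivAt (fun x => ∫ ω, f (x - g ω) ∂μ) (∫ ω, f' (x - g ω) ∂μ) x := by
  have hfc : Continuous f := continuous_iff_continuousAt.2 fun z => (hf z).continuousAt
  exact hasFDerivAt_integral_of_dominated_of_fderiv_le
    (F' := fun x ω => f' (x - g ω)) (bound := fun _ => B) Filter.univ_mem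
    (.of_forall fun x => (integrable_comp_sub_of_norm_le hfc hfA hg x).1)
    (integrable_comp_sub_of_norm_le hfc hfA hg x)
    (hf'.comp_aestronglyMeasurable (aestronglyMeasurable_const.sub hg))
    (ae_of_all _ fun _ _ _ => hf'B _) (integrable_const B)
    (ae_of_all _ fun ω y _ => (hf (y - g ω)).comp y ((hasFDerivAt_id y).sub_const _))

theorem hasGradientAt_integral_comp_sub [InnerProductSpace ℝ E] [CompleteSpace E]
    {f : E → ℝ} {f' : E → E}
    (hf : ∀ z, HasGradientAt f (f' z) z) (hf' : Continuous f') {A B : ℝ}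
    (hfA : ∀ z, ‖f z‖ ≤ A) (hf'B : ∀ z, ‖f' z‖ ≤ B) (hg : AEStronglyMeasurable g μ) (x : E) :
    HasGradientAt (fun x => ∫ ω, f (x - g ω) ∂μ) (∫ ω, f' (x - g ω) ∂μ) x := by
  rw [hasGradientAt_iff_hasFDerivAt]
  refine (hasFDerivAt_integral_comp_sub (f' := fun z => toDual ℝ E (f' z))
    (fun z => hasGradientAt_iff_hasFDerivAt.1 (hf z)) ((toDual ℝ E).continuous.comp hf') hfA
    (by simpa using hf'B) hg x).congr_fderiv ?_
  exact (toDual ℝ E).toLinearIsometry.integral_comp_comm _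

end ParametricIntegral

section Gaussian

variable {E : Type*} [NormedAddCommGroup E] {c s : ℝ}

noncomputable def gaussianKernel (c s : ℝ) (z : E) : ℝ := c * Real.exp (-‖z‖ ^ 2 / (2 * s ^ 2))

theorem gaussianKernel_pos (hc : 0 < c) (z : E) : 0 < gaussianKernel c s z := by
  unfold gaussianKernel; positivity

theorem norm_gaussianKernel_le (hc : 0 ≤ c) (z : E) : ‖gaussianKernel c s z‖ ≤ c := by
  have hexp : Real.exp (-‖z‖ ^ 2 / (2 * s ^ 2)) ≤ 1 := by
    rw [Real.exp_le_one_iff, neg_div, neg_nonpos]; positivity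
  rw [gaussianKernel, norm_mul, Real.norm_of_nonneg hc, Real.norm_of_nonneg (Real.exp_pos _).le]
  exact mul_le_of_le_one_right hc hexp

theorem norm_gaussianKernel_smul_le [NormedSpace ℝ E] (hc : 0 ≤ c) (hs : 0 < s) (z : E) :
    ‖gaussianKernel c s z • z‖ ≤ c * s := by
  rw [norm_smul, gaussianKernel, norm_mul, Real.norm_of_nonneg hc,
    Real.norm_of_nonneg (Real.exp_pos _).le, mul_assoc, mul_comm (Real.exp _)]
  exact mul_le_mul_of_nonneg_left (Real.mul_exp_neg_sq_div_le hs ‖z‖) hc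

theorem continuous_gaussianKernel : Continuous (gaussianKernel c s : E → ℝ) := by
  unfold gaussianKernel; fun_prop

theorem hasGradientAt_gaussianKernel [InnerProductSpace ℝ E] [CompleteSpace E] (z : E) :
    HasGradientAt (gaussianKernel c s) (-(s ^ 2)⁻¹ • gaussianKernel c s z • z) z := by
  have hk : gaussianKernel c s = fun x : E => c * Real.exp (-‖x‖ ^ 2 * (2 * s ^ 2)⁻¹) := by
    funext x; rw [gaussianKernel, div_eq_mul_inv]
  rw [hasGradientAt_iff_hasFDerivAt, hk]
  refine ((((hasFDerivAt_id z).norm_sq.fun_neg.mul_const (2 * s ^ 2)⁻¹).exp).const_mul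
    c).congr_fderiv ?_
  ext v
  simp only [id_eq, mul_inv_rev, neg_mul, ContinuousLinearMap.comp_id, smul_neg,
    neg_apply, smul_apply, coe_innerSL_apply,
    nsmul_eq_mul, Nat.cast_ofNat, smul_eq_mul, neg_smul, map_neg, map_smul, toDual_apply_apply,
    neg_inj]
  ring

theorem hasGradientAt_integral_gaussianKernel_sub [InnerProductSpace ℝ E] [CompleteSpace E]
    {Ω : Type*} [MeasurableSpace Ω] {μ : Measure Ω} [IsFiniteMeasure μ] {g : Ω → E}
    (hc : 0 ≤ c) (hs : 0 < s) (hg : AEStronglyMeasurable g μ) (x : E) :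
    HasGradientAt (fun x => ∫ ω, gaussianKernel c s (x - g ω) ∂μ)
      (-(s ^ 2)⁻¹ • ∫ ω, gaussianKernel c s (x - g ω) • (x - g ω) ∂μ) x := by
  rw [← integral_smul]
  refine hasGradientAt_integral_comp_sub (B := (s ^ 2)⁻¹ * (c * s)) hasGradientAt_gaussianKernel
    ((continuous_gaussianKernel.smul continuous_id).const_smul _) (norm_gaussianKernel_le hc)
    (fun z => ?_) hg x
  rw [norm_smul, norm_neg, norm_inv, norm_pow, Real.norm_of_nonneg hs.le]
  exact mul_le_mul_of_nonneg_left (norm_gaussianKernel_smul_le hc hs z) (by positivity)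

end Gaussian

namespace LinearPath

variable {E : Type*} [NormedAddCommGroup E] [NormedSpace ℝ E] {t : ℝ} {x : E}

theorem smul_velocity_eq (ht : t ≠ 0) (hs : 1 - t ≠ 0) (a : ℝ) (y : E) :
    a • (y - (1 - t)⁻¹ • (x - t • y)) = t⁻¹ • (a • x - (1 - t)⁻¹ • (a • (x - t • y))) := by
  match_scalars <;> field_simp <;> ring

variable [MeasurableSpace E] {ν : Measure E} {k : E → ℝ}

theorem integrable_smul_velocity (ht : t ≠ 0) (hs : 1 - t ≠ 0)
    (hk : Integrable (fun y => k (x - t • y)) ν)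
    (hkn : Integrable (fun y => k (x - t • y) • (x - t • y)) ν) :
    Integrable (fun y => k (x - t • y) • (y - (1 - t)⁻¹ • (x - t • y))) ν := by
  simp_rw [smul_velocity_eq ht hs]
  exact ((hk.smul_const x).sub (hkn.smul (1 - t)⁻¹)).smul t⁻¹

theorem integral_smul_velocity [CompleteSpace E] (ht : t ≠ 0) (hs : 1 - t ≠ 0)
    (hk : Integrable (fun y => k (x - t • y)) ν)
    (hkn : Integrable (fun y => k (x - t • y) • (x - t • y)) ν) :
    ∫ y, k (x - t • y) • (y - (1 - t)⁻¹ • (x - t • y)) ∂ν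
      = t⁻¹ • ((∫ y, k (x - t • y) ∂ν) • x - (1 - t)⁻¹ • ∫ y, k (x - t • y) • (x - t • y) ∂ν) := by
  simp_rw [smul_velocity_eq ht hs]
  rw [integral_smul, integral_sub (hk.smul_const x)
    (g := fun y => (1 - t)⁻¹ • (k (x - t • y) • (x - t • y))) (hkn.smul _), integral_smul_const,
    integral_smul]

end LinearPath

/-- **Score–velocity identity for the independent linear flow-matching path.**
For a probability measure `ν` on `ℝ^d` and `t ∈ (0,1)`, with
`p_t(x) = ∫ φ_{1−t}(x − t·y) dν(y)` (the density of `X_t = (1−t)X₀ + tX₁` with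
`X₀ ∼ N(0, I_d)` independent of `X₁ ∼ ν`) and the marginal velocity field
`v_t(x) = (∫ (y − (x − t·y)/(1−t))·φ_{1−t}(x − t·y) dν(y))/p_t(x)`
(all integrals converging absolutely), the density `p_t` is strictly positive and
differentiable, and the score satisfies `∇ log p_t(x) = (t·v_t(x) − x)/(1−t)`. -/
theorem flow_matching_score_velocity_identity
    {d : ℕ} (ν : Measure (EuclideanSpace ℝ (Fin d))) [IsProbabilityMeasure ν]
    (t : ℝ) (ht : t ∈ Set.Ioo (0 : ℝ) 1)
    (φ : ℝ → EuclideanSpace ℝ (Fin d) → ℝ)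
    (hφ : ∀ (s : ℝ) (x : EuclideanSpace ℝ (Fin d)),
      φ s x = (2 * Real.pi * s ^ 2) ^ (-(d : ℝ) / 2)
        * Real.exp (-‖x‖ ^ 2 / (2 * s ^ 2)))
    (pt : EuclideanSpace ℝ (Fin d) → ℝ)
    (hpt : ∀ x, pt x = ∫ y, φ (1 - t) (x - t • y) ∂ν)
    (vt : EuclideanSpace ℝ (Fin d) → EuclideanSpace ℝ (Fin d))
    (hvt : ∀ x, vt x = (pt x)⁻¹ •
      ∫ y, φ (1 - t) (x - t • y) • (y - (1 - t)⁻¹ • (x - t • y)) ∂ν) :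
    (∀ x, Integrable
      (fun y => φ (1 - t) (x - t • y) • (y - (1 - t)⁻¹ • (x - t • y))) ν) ∧
    (∀ x, 0 < pt x) ∧
    Differentiable ℝ pt ∧
    (∀ x, gradient (fun z => Real.log (pt z)) x = (1 - t)⁻¹ • (t • vt x - x)) := by
  obtain ⟨ht0, ht1⟩ := ht
  have hs : 0 < 1 - t := sub_pos.2 ht1
  set c := (2 * Real.pi * (1 - t) ^ 2) ^ (-(d : ℝ) / 2)
  have hc : 0 < c := Real.rpow_pos_of_pos (by positivity) _
  rw [show φ (1 - t) = gaussianKernel c (1 - t) from funext (hφ _)] at hpt hvt ⊢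
  set k : EuclideanSpace ℝ (Fin d) → ℝ := gaussianKernel c (1 - t)
  have hg : AEStronglyMeasurable (fun y : EuclideanSpace ℝ (Fin d) => t • y) ν :=
    (continuous_const_smul t).aestronglyMeasurable
  have hk_int : ∀ x, Integrable (fun y => k (x - t • y)) ν :=
    integrable_comp_sub_of_norm_le continuous_gaussianKernel (norm_gaussianKernel_le hc.le) hg
  have hnoise_int : ∀ x, Integrable (fun y => k (x - t • y) • (x - t • y)) ν :=
    integrable_comp_sub_of_norm_le (h := fun z => k z • z)
      (continuous_gaussianKernel.smul continuous_id) (norm_gaussianKernel_smul_le hc.le hs) hg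
  have hpos : ∀ x, 0 < pt x := fun x =>
    hpt x ▸ integral_pos_of_forall_pos (fun y => gaussianKernel_pos hc _) (hk_int x)
  have hgrad : ∀ x, HasGradientAt pt
      (-((1 - t) ^ 2)⁻¹ • ∫ y, k (x - t • y) • (x - t • y) ∂ν) x :=
    funext hpt ▸ hasGradientAt_integral_gaussianKernel_sub hc.le hs hg
  refine ⟨fun x => LinearPath.integrable_smul_velocity ht0.ne' hs.ne' (hk_int x) (hnoise_int x),
    hpos, fun x => (hgrad x).differentiableAt, fun x => ?_⟩
  rw [((hgrad x).log (hpos x).ne').gradient, hvt,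
    LinearPath.integral_smul_velocity ht0.ne' hs.ne' (hk_int x) (hnoise_int x), ← hpt]
  match_scalars <;> field_simp [(hpos x).ne', ht0.ne', hs.ne']
  ring
end
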